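/- arXiv:2405.07147 — 3 statements merged into one kernel-verified Lean document; each statement's English description precedes it below -/
import Mathlib

section
/- Let A ∈ ℝ^{m×n}, let Q ∈ ℝ^{m×μ} be orthonormal (QᵀQ = I_μ), and let R ∈ ℝ^{μ×ℓ}, Ω ∈ ℝ^{m×ℓ}, F ∈ ℝ^{ℓ×m} be arbitrary real matrices. Then ‖AAᵀ − QQᵀAAᵀ‖_F ≤ 2‖AAᵀΩF − AAᵀ‖_F + 2‖F‖₂ · ‖QR − AAᵀΩ‖_F. -/
open Matrix
open scoped BigOperators

noncomputable section

/-- Frobenius norm of a real matrix. -/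
def frobNorm {m n : ℕ} (A : Matrix (Fin m) (Fin n) ℝ) : ℝ :=
  Real.sqrt (∑ i, ∑ j, A i j ^ 2)

/-- Nonincreasing rearrangement of a finite tuple of reals. -/
def sortedDesc {n : ℕ} (f : Fin n → ℝ) : Fin n → ℝ :=
  fun k => - ((fun i => - f i) ∘ Tuple.sort (fun i => - f i)) k

/-- `sval A k` is the `(k+1)`-st largest singular value of `A` (i.e. 0-based index `k`),
the square root of the `(k+1)`-st largest eigenvalue of `AᵀA`; it is `0` for `k ≥ n`
(in particular for `k ≥ min m n`). -/
def sval {m n : ℕ} (A : Matrix (Fin m) (Fin n) ℝ) (k : ℕ) : ℝ :=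
  if h : k < n then
    Real.sqrt (sortedDesc (Matrix.isHermitian_conjTranspose_mul_self A).eigenvalues ⟨k, h⟩)
  else 0

/-- Spectral norm (ℓ²→ℓ² operator norm) of a real matrix: its largest singular value. -/
def specNorm {m n : ℕ} (A : Matrix (Fin m) (Fin n) ℝ) : ℝ := sval A 0

/-- `tailDelta A μ = Δ_{μ+1}(A) = sqrt (Σ_{k=μ+1}^{min(m,n)} σ_k(A)²)` (with 1-based σ's,
so 0-based indices `μ, …, min m n - 1`). -/
def tailDelta {m n : ℕ} (A : Matrix (Fin m) (Fin n) ℝ) (μ : ℕ) : ℝ :=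
  Real.sqrt (∑ k ∈ Finset.Ico μ (min m n), sval A k ^ 2)

/-! Since `QQᵀ` fixes `QR`, the residual `P = I - QQᵀ` satisfies
`P(AAᵀ) = P(AAᵀ - AAᵀΩF) + P(AAᵀΩ - QR) F`. An orthogonal projection does not increase the
Frobenius norm, and `‖XF‖_F ≤ ‖F‖₂ ‖X‖_F` row by row, so the bound holds even with both
constants `2` replaced by `1`. -/

attribute [local instance] Matrix.frobeniusNormedAddCommGroup

theorem frobNorm_eq_norm {m n : ℕ} (A : Matrix (Fin m) (Fin n) ℝ) : frobNorm A = ‖A‖ := by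
  simp only [frobNorm, frobenius_norm_def, Real.sqrt_eq_rpow, Real.norm_eq_abs, Real.rpow_two,
    sq_abs]

namespace Matrix

variable {l m n : Type*} [Fintype l] [Fintype m] [Fintype n]

theorem frobenius_norm_sq_eq_sum_dotProduct (A : Matrix m n ℝ) :
    ‖A‖ ^ 2 = ∑ i, A i ⬝ᵥ A i := by
  rw [frobenius_norm_def, ← Real.rpow_natCast, ← Real.rpow_mul (by positivity)]
  norm_num [dotProduct, sq]

theorem frobenius_norm_sq_eq_trace (A : Matrix m n ℝ) : ‖A‖ ^ 2 = (Aᵀ * A).trace := by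
  rw [frobenius_norm_sq_eq_sum_dotProduct]
  simp only [trace, diag, mul_apply, transpose_apply, dotProduct]
  exact Finset.sum_comm

theorem frobenius_norm_sub_proj_le [DecidableEq l] {Q : Matrix m l ℝ} (hQ : Qᵀ * Q = 1)
    (M : Matrix m n ℝ) : ‖M - Q * Qᵀ * M‖ ≤ ‖M‖ := by
  have hQQ : Qᵀ * (Q * (Qᵀ * M)) = Qᵀ * M := by rw [← Matrix.mul_assoc, hQ, Matrix.one_mul]
  have hgram : (M - Q * Qᵀ * M)ᵀ * (M - Q * Qᵀ * M) = Mᵀ * M - (Qᵀ * M)ᵀ * (Qᵀ * M) := by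
    simp only [transpose_sub, transpose_mul, transpose_transpose, Matrix.sub_mul, Matrix.mul_sub,
      Matrix.mul_assoc, hQQ]
    abel
  refine (pow_le_pow_iff_left₀ (norm_nonneg _) (norm_nonneg _) two_ne_zero).mp ?_
  rw [frobenius_norm_sq_eq_trace, frobenius_norm_sq_eq_trace, hgram, trace_sub,
    ← frobenius_norm_sq_eq_trace (Qᵀ * M)]
  linarith [sq_nonneg ‖Qᵀ * M‖]

open MatrixOrder in
theorem IsHermitian.dotProduct_mulVec_le [DecidableEq n] {S : Matrix n n ℝ} (hS : S.IsHermitian)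
    {c : ℝ} (hc : ∀ i, hS.eigenvalues i ≤ c) (v : n → ℝ) : v ⬝ᵥ (S *ᵥ v) ≤ c * (v ⬝ᵥ v) := by
  have hle : S ≤ algebraMap ℝ _ c := le_algebraMap_of_spectrum_le (by
    rw [hS.spectrum_real_eq_range_eigenvalues]
    rintro _ ⟨i, rfl⟩
    exact hc i) hS.isSelfAdjoint
  simpa [Algebra.algebraMap_eq_smul_one, sub_mulVec, smul_mulVec, dotProduct_sub] using
    (le_iff.mp hle).dotProduct_mulVec_nonneg v

end Matrix

theorem le_sortedDesc_zero {n : ℕ} (f : Fin n → ℝ) (i : Fin n) :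
    f i ≤ sortedDesc f ⟨0, i.pos⟩ := by
  have := Tuple.monotone_sort (fun j => -f j)
    (show (⟨0, i.pos⟩ : Fin n) ≤ (Tuple.sort fun j => -f j).symm i from Nat.zero_le _)
  simp only [Function.comp_apply, Equiv.apply_symm_apply] at this
  simp only [sortedDesc, Function.comp_apply]
  linarith

theorem specNorm_nonneg {m n : ℕ} (A : Matrix (Fin m) (Fin n) ℝ) : 0 ≤ specNorm A := by
  unfold specNorm sval
  split <;> positivity

theorem eigenvalues_conjTranspose_mul_self_le_specNorm_sq {m n : ℕ}
    (A : Matrix (Fin m) (Fin n) ℝ) (i : Fin n) :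
    (isHermitian_conjTranspose_mul_self A).eigenvalues i ≤ specNorm A ^ 2 := by
  have hi := le_sortedDesc_zero (isHermitian_conjTranspose_mul_self A).eigenvalues i
  have h0 := (posSemidef_conjTranspose_mul_self A).eigenvalues_nonneg i
  rwa [specNorm, sval, dif_pos i.pos, Real.sq_sqrt (h0.trans hi)]

/-- Bounding `xA` through `Aᵀx` would involve the eigenvalues of `AAᵀ` rather than `AᵀA`;
instead, with `y = xA`, Cauchy–Schwarz gives `‖y‖² = ⟪x, Ay⟫ ≤ ‖x‖ ‖Ay‖ ≤ ‖x‖ ‖A‖₂ ‖y‖`. -/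
theorem dotProduct_vecMul_self_le_specNorm_sq {m n : ℕ} (A : Matrix (Fin m) (Fin n) ℝ)
    (x : Fin m → ℝ) :
    (x ᵥ* A) ⬝ᵥ (x ᵥ* A) ≤ specNorm A ^ 2 * (x ⬝ᵥ x) := by
  set y := x ᵥ* A
  have hAy : (A *ᵥ y) ⬝ᵥ (A *ᵥ y) ≤ specNorm A ^ 2 * (y ⬝ᵥ y) := by
    have := (isHermitian_conjTranspose_mul_self A).dotProduct_mulVec_le
      (eigenvalues_conjTranspose_mul_self_le_specNorm_sq A) y
    rwa [conjTranspose_eq_transpose_of_trivial, ← mulVec_mulVec, dotProduct_mulVec,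
      vecMul_transpose] at this
  have hcs : (y ⬝ᵥ y) ^ 2 ≤ (x ⬝ᵥ x) * ((A *ᵥ y) ⬝ᵥ (A *ᵥ y)) := by
    rw [← dotProduct_mulVec]
    simpa [dotProduct, sq] using Finset.sum_mul_sq_le_sq_mul_sq Finset.univ x (A *ᵥ y)
  have hx : 0 ≤ x ⬝ᵥ x := by simpa using dotProduct_star_self_nonneg x
  have hyy : (y ⬝ᵥ y) ^ 2 ≤ specNorm A ^ 2 * (x ⬝ᵥ x) * (y ⬝ᵥ y) :=
    calc (y ⬝ᵥ y) ^ 2 ≤ (x ⬝ᵥ x) * ((A *ᵥ y) ⬝ᵥ (A *ᵥ y)) := hcs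
      _ ≤ (x ⬝ᵥ x) * (specNorm A ^ 2 * (y ⬝ᵥ y)) := mul_le_mul_of_nonneg_left hAy hx
      _ = specNorm A ^ 2 * (x ⬝ᵥ x) * (y ⬝ᵥ y) := by ring
  nlinarith [mul_nonneg (sq_nonneg (specNorm A)) hx]

theorem frobenius_norm_mul_le_specNorm_mul {l : Type*} [Fintype l] {m n : ℕ}
    (X : Matrix l (Fin m) ℝ) (A : Matrix (Fin m) (Fin n) ℝ) : ‖X * A‖ ≤ specNorm A * ‖X‖ := by
  refine (pow_le_pow_iff_left₀ (norm_nonneg _)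
    (mul_nonneg (specNorm_nonneg A) (norm_nonneg X)) two_ne_zero).mp ?_
  rw [mul_pow, frobenius_norm_sq_eq_sum_dotProduct, frobenius_norm_sq_eq_sum_dotProduct,
    Finset.mul_sum]
  exact Finset.sum_le_sum fun i _ => by
    simpa only [mul_apply_eq_vecMul] using dotProduct_vecMul_self_le_specNorm_sq A (X i)

theorem frob_proj_gram_le_general {m n μ ℓ : ℕ}
    (A : Matrix (Fin m) (Fin n) ℝ)
    (Q : Matrix (Fin m) (Fin μ) ℝ) (hQ : Qᵀ * Q = 1)
    (R : Matrix (Fin μ) (Fin ℓ) ℝ) (Ω : Matrix (Fin m) (Fin ℓ) ℝ)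
    (F : Matrix (Fin ℓ) (Fin m) ℝ) :
    frobNorm (A * Aᵀ - Q * Qᵀ * (A * Aᵀ)) ≤
      2 * frobNorm (A * Aᵀ * Ω * F - A * Aᵀ) +
        2 * specNorm F * frobNorm (Q * R - A * Aᵀ * Ω) := by
  set B := A * Aᵀ
  set D := B - B * Ω * F
  set E := B * Ω - Q * R
  have hsplit : B - Q * Qᵀ * B = (D - Q * Qᵀ * D) + (E - Q * Qᵀ * E) * F := by
    have hQR : Q * Qᵀ * (Q * R) = Q * R := by
      rw [Matrix.mul_assoc, ← Matrix.mul_assoc Qᵀ, hQ, Matrix.one_mul]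
    simp only [D, E, Matrix.mul_sub, Matrix.sub_mul, hQR, Matrix.mul_assoc]
    abel
  have hbound : ‖B - Q * Qᵀ * B‖ ≤ ‖B * Ω * F - B‖ + specNorm F * ‖Q * R - B * Ω‖ := by
    rw [hsplit, norm_sub_rev (B * Ω * F), norm_sub_rev (Q * R)]
    refine norm_add_le_of_le (frobenius_norm_sub_proj_le hQ D)
      ((frobenius_norm_mul_le_specNorm_mul _ F).trans ?_)
    exact mul_le_mul_of_nonneg_left (frobenius_norm_sub_proj_le hQ E) (specNorm_nonneg F)
  simp only [frobNorm_eq_norm]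
  linarith [norm_nonneg (B * Ω * F - B),
    mul_nonneg (specNorm_nonneg F) (norm_nonneg (Q * R - B * Ω))]

/-- For orthonormal `Q`,
`‖AAᵀ − QQᵀAAᵀ‖_F ≤ 2‖AAᵀΩF − AAᵀ‖_F + 2‖F‖₂‖QR − AAᵀΩ‖_F`. -/
theorem frob_proj_gram_le {m n μ ℓ : ℕ} (hμm : μ ≤ m)
    (A : Matrix (Fin m) (Fin n) ℝ)
    (Q : Matrix (Fin m) (Fin μ) ℝ) (hQ : Qᵀ * Q = 1)
    (R : Matrix (Fin μ) (Fin ℓ) ℝ) (Ω : Matrix (Fin m) (Fin ℓ) ℝ)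
    (F : Matrix (Fin ℓ) (Fin m) ℝ) :
    frobNorm (A * Aᵀ - Q * Qᵀ * (A * Aᵀ)) ≤
      2 * frobNorm (A * Aᵀ * Ω * F - A * Aᵀ) +
        2 * specNorm F * frobNorm (Q * R - A * Aᵀ * Ω) :=
  frob_proj_gram_le_general A Q hQ R Ω F
end
end

section
/- Let A ∈ ℝ^{m×n} and let Q ∈ ℝ^{m×μ} be orthonormal (QᵀQ = I_μ). Then ‖A − QQᵀA‖_F² ≤ rank(A) · ‖AAᵀ − QQᵀAAᵀ‖_F, where rank(A) is the rank of A regarded as a real number. -/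
open Matrix
open scoped BigOperators

namespace Matrix

variable {l m n : Type*} [Fintype l] [Fintype m] [Fintype n]

lemma IsHermitian.trace_mul_self_eq_sum_sq [DecidableEq n] {N : Matrix n n ℝ}
    (hN : N.IsHermitian) : trace (N * N) = ∑ i, hN.eigenvalues i ^ 2 := by
  conv_lhs => rw [hN.spectral_theorem]
  rw [← map_mul, Unitary.conjStarAlgAut_apply, trace_mul_cycle,
    Unitary.coe_star_mul_self, one_mul, diagonal_mul_diagonal, trace_diagonal]
  simp [sq]

/-- Cauchy–Schwarz on the `rank N` nonzero eigenvalues. -/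
lemma IsHermitian.trace_sq_le_rank_mul_trace_mul_self {N : Matrix n n ℝ} (hN : N.IsHermitian) :
    trace N ^ 2 ≤ N.rank * trace (N * N) := by
  classical
  set s := Finset.univ.filter fun i => hN.eigenvalues i ≠ 0
  have hrank : (N.rank : ℝ) = s.card := by
    rw [hN.rank_eq_card_non_zero_eigs, Fintype.card_subtype]
  have htrace : trace N = ∑ i ∈ s, hN.eigenvalues i := by
    rw [hN.trace_eq_sum_eigenvalues, Finset.sum_filter_ne_zero]
    simp
  have hsq : ∑ i ∈ s, hN.eigenvalues i ^ 2 ≤ trace (N * N) := by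
    rw [hN.trace_mul_self_eq_sum_sq]
    exact Finset.sum_le_sum_of_subset_of_nonneg (Finset.subset_univ s)
      fun i _ _ => sq_nonneg _
  calc trace N ^ 2 ≤ s.card * ∑ i ∈ s, hN.eigenvalues i ^ 2 :=
        htrace ▸ sq_sum_le_card_mul_sum_sq
    _ ≤ N.rank * trace (N * N) := by rw [hrank]; gcongr

lemma trace_mul_transpose_self_nonneg (X : Matrix l n ℝ) : 0 ≤ trace (X * Xᵀ) := by
  simpa [conjTranspose_eq_transpose_of_trivial] using
    (posSemidef_self_mul_conjTranspose X).trace_nonneg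

lemma trace_mul_mul_transpose_le [DecidableEq m] (M : Matrix l m ℝ) {R : Matrix m m ℝ}
    (hR : R.IsSymm) (hRR : IsIdempotentElem R) : trace (M * R * Mᵀ) ≤ trace (M * Mᵀ) := by
  have hR' : (1 - R).IsSymm := by simp [IsSymm, hR.eq]
  have hsplit : M * (1 - R) * (M * (1 - R))ᵀ = M * Mᵀ - M * R * Mᵀ :=
    calc M * (1 - R) * (M * (1 - R))ᵀ = M * ((1 - R) * (1 - R)) * Mᵀ := by
          rw [transpose_mul, hR'.eq]
          simp only [Matrix.mul_assoc]
      _ = M * Mᵀ - M * R * Mᵀ := by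
          rw [hRR.one_sub.eq, Matrix.mul_sub, Matrix.sub_mul, Matrix.mul_one]
  have := trace_mul_transpose_self_nonneg (M * (1 - R))
  rw [hsplit, trace_sub] at this
  linarith

end Matrix

open Matrix

lemma frobNorm_eq_sqrt_trace {m n : ℕ} (X : Matrix (Fin m) (Fin n) ℝ) :
    frobNorm X = Real.sqrt (trace (X * Xᵀ)) := by
  simp [frobNorm, trace, mul_apply, sq]

lemma frobNorm_sq {m n : ℕ} (X : Matrix (Fin m) (Fin n) ℝ) :
    frobNorm X ^ 2 = trace (X * Xᵀ) := by
  rw [frobNorm_eq_sqrt_trace, Real.sq_sqrt (trace_mul_transpose_self_nonneg X)]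

/-- With `N = (R A)(R A)ᵀ = R A Aᵀ R`, the left side is `trace N`, while
`trace (N * N) ≤ ‖R A Aᵀ‖_F²` and `rank N ≤ rank A`. -/
lemma frobNorm_mul_sq_le_rank_mul {m n : ℕ} {R : Matrix (Fin m) (Fin m) ℝ} (hR : R.IsSymm)
    (hRR : IsIdempotentElem R) (A : Matrix (Fin m) (Fin n) ℝ) :
    frobNorm (R * A) ^ 2 ≤ A.rank * frobNorm (R * (A * Aᵀ)) := by
  set N := R * A * (R * A)ᵀ
  set M := R * (A * Aᵀ)
  have hN : N.IsHermitian := by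
    simpa [N, conjTranspose_eq_transpose_of_trivial] using isHermitian_mul_conjTranspose_self (R * A)
  have hNN : N * N = M * R * Mᵀ := by
    simp only [N, M, transpose_mul, transpose_transpose, hR.eq, Matrix.mul_assoc]
    rw [← Matrix.mul_assoc R R, hRR.eq]
  have hrank : N.rank ≤ A.rank ^ 2 :=
    ((rank_mul_le_left _ _).trans (rank_mul_le_right _ _)).trans (Nat.le_self_pow two_ne_zero _)
  have hM := trace_mul_transpose_self_nonneg M
  have hNN_nonneg : 0 ≤ trace (N * N) := by
    rw [hN.trace_mul_self_eq_sum_sq]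
    positivity
  rw [frobNorm_sq, frobNorm_eq_sqrt_trace]
  refine le_of_sq_le_sq ?_ (by positivity)
  calc trace N ^ 2 ≤ N.rank * trace (N * N) := hN.trace_sq_le_rank_mul_trace_mul_self
    _ ≤ (A.rank ^ 2 : ℕ) * trace (M * Mᵀ) := by
        gcongr
        exact hNN ▸ trace_mul_mul_transpose_le M hR hRR
    _ = (A.rank * Real.sqrt (trace (M * Mᵀ))) ^ 2 := by
        rw [mul_pow, Real.sq_sqrt hM]
        push_cast
        ring

theorem frob_sq_le_rank_mul_general {m n μ : ℕ}
    (A : Matrix (Fin m) (Fin n) ℝ)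
    (Q : Matrix (Fin m) (Fin μ) ℝ) (hQ : Qᵀ * Q = 1) :
    frobNorm (A - Q * Qᵀ * A) ^ 2 ≤
      (A.rank : ℝ) * frobNorm (A * Aᵀ - Q * Qᵀ * (A * Aᵀ)) := by
  have hP : IsIdempotentElem (Q * Qᵀ) := by
    rw [IsIdempotentElem, Matrix.mul_assoc, ← Matrix.mul_assoc Qᵀ, hQ, Matrix.one_mul]
  have hR : (1 - Q * Qᵀ).IsSymm := by
    simp [IsSymm, transpose_mul]
  have hB : A - Q * Qᵀ * A = (1 - Q * Qᵀ) * A := by rw [Matrix.sub_mul, Matrix.one_mul]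
  have hM : A * Aᵀ - Q * Qᵀ * (A * Aᵀ) = (1 - Q * Qᵀ) * (A * Aᵀ) := by
    rw [Matrix.sub_mul, Matrix.one_mul]
  rw [hB, hM]
  exact frobNorm_mul_sq_le_rank_mul hR hP.one_sub A

/-- For orthonormal `Q`,
`‖A − QQᵀA‖_F² ≤ rank(A) · ‖AAᵀ − QQᵀAAᵀ‖_F`. -/
theorem frob_sq_le_rank_mul {m n μ : ℕ} (hμm : μ ≤ m)
    (A : Matrix (Fin m) (Fin n) ℝ)
    (Q : Matrix (Fin m) (Fin μ) ℝ) (hQ : Qᵀ * Q = 1) :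
    frobNorm (A - Q * Qᵀ * A) ^ 2 ≤
      (A.rank : ℝ) * frobNorm (A * Aᵀ - Q * Qᵀ * (A * Aᵀ)) :=
  frob_sq_le_rank_mul_general A Q hQ
end

section
/- With the tensor-train projection setup (tensor A ∈ ℝ^{I₁×⋯×I_N}, orthonormal matrices Q₁,…,Q_{N−1}, and the recursively defined matrices A₁,…,A_{N−1}), for every n = 1,…,N−1 and every integer μ ≥ 0, the singular values satisfy Σ_{i=μ+1}^{min(μ_{n−1}I_n, I_{n+1}⋯I_N)} σ_i(A_n)² ≤ Σ_{i=μ+1}^{min(I₁⋯I_n, I_{n+1}⋯I_N)} σ_i(A_{([n])})², i.e., Δ_{μ+1}(A_n) ≤ Δ_{μ+1}(A_{([n])}). -/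
open Matrix
open scoped BigOperators

noncomputable section

/-- Value of a dependent tuple at a natural-number position (`0` out of range). -/
def pv {N : ℕ} {g : Fin N → ℕ} (x : (k : Fin N) → Fin (g k)) (k : ℕ) : ℕ :=
  if h : k < N then (x ⟨k, h⟩ : ℕ) else 0

/-- Mixed-radix (little-endian, MATLAB-style) linearization of the components `a, …, b-1`
(0-based) of a multi-index `x` of a tensor with dimensions `I 1, …, I N`
(the 0-based component `k` has dimension `I (k+1)`):
`ttCode I x a b = Σ_{k∈[a,b)} x_k · Π_{t∈[a,k)} I (t+1)`. -/
def ttCode (I : ℕ → ℕ) {N : ℕ} (x : (k : Fin N) → Fin (I ((k : ℕ) + 1))) (a b : ℕ) : ℕ :=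
  ∑ k ∈ Finset.Ico a b, pv x k * ∏ t ∈ Finset.Ico a k, I (t + 1)

/-- Frobenius norm of a tensor: square root of the sum of squares of all entries. -/
def tnorm {N : ℕ} {g : Fin N → ℕ} (T : ((k : Fin N) → Fin (g k)) → ℝ) : ℝ :=
  Real.sqrt (∑ x, T x ^ 2)

/-- Entry of a matrix at natural-number positions (`0` out of range). -/
def matExt {p q : ℕ} (M : Matrix (Fin p) (Fin q) ℝ) (a b : ℕ) : ℝ :=
  if h : a < p ∧ b < q then M ⟨a, h.1⟩ ⟨b, h.2⟩ else 0

end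

/-!
By induction on `n`, `A_n = W_n A_([n])` for a contraction `W_n` (`W_nᵀ W_n ≤ 1`): `W₁` is the
identity up to relabelling, and `A_{n+1}` arises from `Q_nᵀ A_n = (Q_nᵀ W_n) A_([n])` by the same
reshape that turns `A_([n])` into `A_([n+1])`, so `W_{n+1} = 1_{I_{n+1}} ⊗ Q_nᵀ W_n` works.
Hence `A_nᵀ A_n ≤ A_([n])ᵀ A_([n])` in the Loewner order, and tail sums of eigenvalues are
monotone in that order by Ky Fan's minimum principle: the sum of the `q - μ` smallest eigenvalues
of `X` is at most `Σ_{j ∈ S} (Uᵀ X U)_{jj}` for every orthogonal `U` and every `|S| = q - μ`.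
-/

open Matrix Finset
open scoped Kronecker

lemma posSemidef_transpose_mul_self {m n : Type*} [Fintype m] [Fintype n] (A : Matrix m n ℝ) :
    (Aᵀ * A).PosSemidef := by
  simpa using posSemidef_conjTranspose_mul_self A

def IsContraction {m n : Type*} [Fintype m] [DecidableEq n] (W : Matrix m n ℝ) : Prop :=
  (1 - Wᵀ * W).PosSemidef

section Contraction

variable {l m n : Type*}

lemma isContraction_one [Fintype n] [DecidableEq n] : IsContraction (1 : Matrix n n ℝ) := by
  simpa [IsContraction] using PosSemidef.zero

lemma IsContraction.mul [Fintype l] [Fintype m] [Fintype n] [DecidableEq m] [DecidableEq n]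
    {M : Matrix l m ℝ} {W : Matrix m n ℝ} (hM : IsContraction M) (hW : IsContraction W) :
    IsContraction (M * W) := by
  have h : 1 - (M * W)ᵀ * (M * W) = (1 - Wᵀ * W) + Wᵀ * (1 - Mᵀ * M) * W := by
    simp only [transpose_mul, Matrix.mul_sub, Matrix.sub_mul, Matrix.mul_one, Matrix.mul_assoc]
    abel
  rw [IsContraction, h]
  exact hW.add (by simpa using hM.conjTranspose_mul_mul_same W)

lemma isContraction_transpose_of_transpose_mul_self [Fintype m] [Fintype n] [DecidableEq m]
    [DecidableEq n] {Q : Matrix m n ℝ} (hQ : Qᵀ * Q = 1) : IsContraction Qᵀ := by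
  have h : 1 - Qᵀᵀ * Qᵀ = (1 - Q * Qᵀ)ᵀ * (1 - Q * Qᵀ) := by
    simp only [transpose_transpose, transpose_sub, transpose_one, transpose_mul, Matrix.mul_sub,
      Matrix.sub_mul, Matrix.mul_one, Matrix.one_mul, Matrix.mul_assoc]
    rw [← Matrix.mul_assoc Qᵀ Q, hQ, Matrix.one_mul]
    abel
  rw [IsContraction, h]
  exact posSemidef_transpose_mul_self _

lemma IsContraction.submatrix {l' n' : Type*} [Fintype m] [Fintype l'] [DecidableEq n]
    [DecidableEq n'] {W : Matrix m n ℝ} (hW : IsContraction W) (e : l' ≃ m) (f : n' ≃ n) :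
    IsContraction (W.submatrix e f) := by
  have h : 1 - (W.submatrix e f)ᵀ * W.submatrix e f = (1 - Wᵀ * W).submatrix f f := by
    rw [transpose_submatrix, submatrix_mul_equiv, ← submatrix_one_equiv f]
    rfl
  rw [IsContraction, h]
  exact PosSemidef.submatrix hW f

lemma IsContraction.one_kronecker [Fintype l] [Fintype m] [Fintype n] [DecidableEq l]
    [DecidableEq n] {W : Matrix m n ℝ} (hW : IsContraction W) :
    IsContraction ((1 : Matrix l l ℝ) ⊗ₖ W) := by
  have h : (1 : Matrix l l ℝ) ⊗ₖ (1 - Wᵀ * W) + 1 ⊗ₖ (Wᵀ * W) = 1 := by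
    rw [← kronecker_add, sub_add_cancel, one_kronecker_one]
  rw [IsContraction, ← kroneckerMap_transpose, transpose_one, ← mul_kronecker_mul,
    Matrix.one_mul, ← eq_sub_of_add_eq h]
  exact PosSemidef.one.kronecker hW

end Contraction

lemma sum_le_sum_mul_of_threshold {ι : Type*} [Fintype ι] [DecidableEq ι] (g t : ι → ℝ)
    (B : Finset ι) (c : ℝ) (hB : ∀ i ∈ B, g i ≤ c) (hBc : ∀ i ∉ B, c ≤ g i)
    (ht0 : ∀ i, 0 ≤ t i) (ht1 : ∀ i, t i ≤ 1) (ht : ∑ i, t i = B.card) :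
    ∑ i ∈ B, g i ≤ ∑ i, g i * t i := by
  have key : 0 ≤ ∑ i, (g i - c) * (t i - if i ∈ B then 1 else 0) := by
    refine sum_nonneg fun i _ => ?_
    by_cases hi : i ∈ B
    · rw [if_pos hi]; nlinarith [hB i hi, ht1 i]
    · rw [if_neg hi]; nlinarith [hBc i hi, ht0 i]
  have expand : ∑ i, (g i - c) * (t i - if i ∈ B then 1 else 0)
      = ∑ i, g i * t i - ∑ i ∈ B, g i - c * (∑ i, t i - B.card) := by
    simp only [mul_sub, sub_mul, sum_sub_distrib, mul_ite, mul_one, mul_zero, sum_ite_mem,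
      univ_inter, ← mul_sum, sum_const, nsmul_eq_mul]
    ring
  rw [expand, ht, sub_self, mul_zero, sub_zero] at key
  linarith

lemma sortedDesc_apply {n : ℕ} (f : Fin n → ℝ) (k : Fin n) :
    sortedDesc f k = f (Tuple.sort (fun i => -f i) k) := by
  simp [sortedDesc]

lemma sortedDesc_antitone {n : ℕ} (f : Fin n → ℝ) : Antitone (sortedDesc f) := by
  intro i j hij
  have h := Tuple.monotone_sort (fun i => -f i) hij
  simp only [Function.comp_apply] at h
  rw [sortedDesc_apply, sortedDesc_apply]
  linarith

lemma transpose_eigenvectorUnitary_mul_self {q : ℕ} {X : Matrix (Fin q) (Fin q) ℝ}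
    (hX : X.IsHermitian) :
    (hX.eigenvectorUnitary : Matrix (Fin q) (Fin q) ℝ)ᵀ * hX.eigenvectorUnitary = 1 := by
  have h := Unitary.coe_star_mul_self hX.eigenvectorUnitary
  rwa [star_eq_conjTranspose, conjTranspose_eq_transpose_of_trivial] at h

lemma transpose_eigenvectorUnitary_mul_mul_self {q : ℕ} {Y : Matrix (Fin q) (Fin q) ℝ}
    (hY : Y.IsHermitian) :
    (hY.eigenvectorUnitary : Matrix (Fin q) (Fin q) ℝ)ᵀ * Y * hY.eigenvectorUnitary
      = diagonal hY.eigenvalues := by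
  have h := hY.conjStarAlgAut_star_eigenvectorUnitary
  rwa [Unitary.conjStarAlgAut_star_apply, star_eq_conjTranspose,
    conjTranspose_eq_transpose_of_trivial] at h

theorem sum_Ici_sortedDesc_le_sum_diag {q : ℕ} {X : Matrix (Fin q) (Fin q) ℝ}
    (hX : X.IsHermitian) {U : Matrix (Fin q) (Fin q) ℝ} (hU : Uᵀ * U = 1) (k : Fin q)
    (S : Finset (Fin q)) (hS : S.card = q - k) :
    ∑ i ∈ Ici k, sortedDesc hX.eigenvalues i ≤ ∑ j ∈ S, (Uᵀ * X * U) j j := by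
  set V : Matrix (Fin q) (Fin q) ℝ := ↑hX.eigenvectorUnitary
  set C := Vᵀ * U
  have hCC : Cᵀ * C = 1 := by
    rw [transpose_mul, transpose_transpose, Matrix.mul_assoc, ← Matrix.mul_assoc V,
      mul_eq_one_comm.mp (transpose_eigenvectorUnitary_mul_self hX), Matrix.one_mul, hU]
  have hC : C * Cᵀ = 1 := mul_eq_one_comm.mp hCC
  have hconj : Uᵀ * X * U = Cᵀ * diagonal hX.eigenvalues * C := by
    have h : X = V * diagonal hX.eigenvalues * Vᵀ := by
      conv_lhs => rw [hX.spectral_theorem]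
      rw [Unitary.conjStarAlgAut_apply, star_eq_conjTranspose,
        conjTranspose_eq_transpose_of_trivial]
      rfl
    conv_lhs => rw [h]
    simp only [C, transpose_mul, transpose_transpose, Matrix.mul_assoc]
  set t : Fin q → ℝ := fun i => ∑ j ∈ S, C i j ^ 2
  have hdiag : ∑ j ∈ S, (Uᵀ * X * U) j j = ∑ i, hX.eigenvalues i * t i := by
    rw [hconj]
    simp only [Matrix.mul_apply (M := Cᵀ * _), mul_diagonal, transpose_apply, t, mul_sum]
    rw [sum_comm]
    exact sum_congr rfl fun j _ => sum_congr rfl fun i _ => by ring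
  have ht0 : ∀ i, 0 ≤ t i := fun i => sum_nonneg fun j _ => sq_nonneg _
  have ht1 : ∀ i, t i ≤ 1 := by
    intro i
    calc t i ≤ ∑ j, C i j ^ 2 := sum_le_univ_sum_of_nonneg fun j => sq_nonneg _
      _ = 1 := by simpa [Matrix.mul_apply, sq] using congrFun (congrFun hC i) i
  have ht : ∑ i, t i = S.card := by
    rw [sum_comm, ← nsmul_one, ← sum_const]
    refine sum_congr rfl fun j _ => ?_
    simpa [Matrix.mul_apply, sq] using congrFun (congrFun hCC j) j
  set σ := Tuple.sort (fun i => -hX.eigenvalues i)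
  have hsort : ∑ i, hX.eigenvalues i * t i = ∑ i, sortedDesc hX.eigenvalues i * t (σ i) := by
    rw [← Equiv.sum_comp σ]
    simp only [sortedDesc_apply, σ]
  rw [hdiag, hsort]
  refine sum_le_sum_mul_of_threshold _ _ _ (sortedDesc hX.eigenvalues k)
    (fun i hi => sortedDesc_antitone _ (mem_Ici.mp hi))
    (fun i hi => sortedDesc_antitone _ (le_of_lt (by simpa using hi)))
    (fun i => ht0 _) (fun i => ht1 _) ?_
  rw [Equiv.sum_comp σ t, ht, hS, Fin.card_Ici]

theorem sum_Ici_sortedDesc_le_of_posSemidef_sub {q : ℕ} {X Y : Matrix (Fin q) (Fin q) ℝ}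
    (hX : X.IsHermitian) (hY : Y.IsHermitian) (hXY : (Y - X).PosSemidef) (k : Fin q) :
    ∑ i ∈ Ici k, sortedDesc hX.eigenvalues i ≤ ∑ i ∈ Ici k, sortedDesc hY.eigenvalues i := by
  set V : Matrix (Fin q) (Fin q) ℝ := ↑hY.eigenvectorUnitary
  set S := (Ici k).map (Tuple.sort fun i => -hY.eigenvalues i).toEmbedding
  have hdiag : ∀ j, (Vᵀ * X * V) j j ≤ (Vᵀ * Y * V) j j := by
    intro j
    have h := (hXY.conjTranspose_mul_mul_same V).diag_nonneg (i := j)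
    simp only [conjTranspose_eq_transpose_of_trivial, Matrix.mul_sub, Matrix.sub_mul,
      Matrix.sub_apply] at h
    linarith
  calc ∑ i ∈ Ici k, sortedDesc hX.eigenvalues i
      ≤ ∑ j ∈ S, (Vᵀ * X * V) j j :=
        sum_Ici_sortedDesc_le_sum_diag hX (transpose_eigenvectorUnitary_mul_self hY) k S
          (by rw [card_map, Fin.card_Ici])
    _ ≤ ∑ j ∈ S, (Vᵀ * Y * V) j j := sum_le_sum fun j _ => hdiag j
    _ = ∑ i ∈ Ici k, sortedDesc hY.eigenvalues i := by
        simp [S, V, transpose_eigenvectorUnitary_mul_mul_self, sortedDesc_apply]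

lemma sortedDesc_eq_zero_of_card_ne_zero_le {n m : ℕ} (f : Fin n → ℝ) (hf : ∀ i, 0 ≤ f i)
    (hm : Fintype.card {i // f i ≠ 0} ≤ m) (k : Fin n) (hk : m ≤ k) : sortedDesc f k = 0 := by
  by_contra hne
  have hpos : 0 < sortedDesc f k := by
    rw [sortedDesc_apply] at hne ⊢
    exact (hf _).lt_of_ne' hne
  have hsub : Iic k ⊆ univ.filter fun i => sortedDesc f i ≠ 0 := fun i hi => by
    simpa using (hpos.trans_le (sortedDesc_antitone f (mem_Iic.mp hi))).ne'
  have hcard : Fintype.card {i // sortedDesc f i ≠ 0} = Fintype.card {i // f i ≠ 0} :=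
    Fintype.card_congr ((Tuple.sort fun i => -f i).subtypeEquiv fun _ => by rw [sortedDesc_apply])
  have hle := card_le_card hsub
  rw [Fin.card_Iic, ← Fintype.card_subtype, hcard] at hle
  omega

lemma sq_sval {m n : ℕ} (A : Matrix (Fin m) (Fin n) ℝ) (k : Fin n) :
    sval A k ^ 2 = sortedDesc (isHermitian_conjTranspose_mul_self A).eigenvalues k := by
  rw [sval, dif_pos k.isLt, Real.sq_sqrt]
  rw [sortedDesc_apply]
  exact (posSemidef_conjTranspose_mul_self A).eigenvalues_nonneg _

lemma sval_eq_zero_of_le {m n : ℕ} (A : Matrix (Fin m) (Fin n) ℝ) {k : ℕ} (hk : m ≤ k) :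
    sval A k = 0 := by
  rw [sval]
  split_ifs with h
  · have hA := isHermitian_conjTranspose_mul_self A
    have hrank : Fintype.card {i // hA.eigenvalues i ≠ 0} ≤ m := by
      rw [← hA.rank_eq_card_non_zero_eigs]
      exact (rank_mul_le_right _ _).trans (A.rank_le_card_height.trans (by simp))
    rw [sortedDesc_eq_zero_of_card_ne_zero_le _
      (posSemidef_conjTranspose_mul_self A).eigenvalues_nonneg hrank ⟨k, h⟩ hk, Real.sqrt_zero]
  · rfl

lemma sum_Ico_sq_sval {m n : ℕ} (A : Matrix (Fin m) (Fin n) ℝ) (k : Fin n) :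
    ∑ i ∈ Ico (k : ℕ) (min m n), sval A i ^ 2
      = ∑ i ∈ Ici k, sortedDesc (isHermitian_conjTranspose_mul_self A).eigenvalues i := by
  have hvanish :
      ∑ i ∈ Ico (k : ℕ) (min m n), sval A i ^ 2 = ∑ i ∈ Ico (k : ℕ) n, sval A i ^ 2 := by
    refine sum_subset (Ico_subset_Ico le_rfl (min_le_right _ _)) fun i hi hi' => ?_
    simp only [mem_Ico] at hi hi'
    rw [sval_eq_zero_of_le A (by omega), zero_pow two_ne_zero]
  rw [hvanish, ← Fin.map_valEmbedding_Ici, sum_map]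
  exact sum_congr rfl fun i _ => sq_sval A i

theorem sum_Ico_sq_sval_le_of_eq_mul {m₁ m₂ q : ℕ} {B : Matrix (Fin m₁) (Fin q) ℝ}
    {Bu : Matrix (Fin m₂) (Fin q) ℝ} {W : Matrix (Fin m₁) (Fin m₂) ℝ} (hW : IsContraction W)
    (hB : B = W * Bu) (μ : ℕ) :
    ∑ i ∈ Ico μ (min m₁ q), sval B i ^ 2 ≤ ∑ i ∈ Ico μ (min m₂ q), sval Bu i ^ 2 := by
  rcases lt_or_ge μ q with hμ | hμ
  · have hgram : (Buᴴ * Bu - Bᴴ * B).PosSemidef := by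
      have h : Buᴴ * Bu - Bᴴ * B = Buᵀ * (1 - Wᵀ * W) * Bu := by
        simp only [hB, conjTranspose_eq_transpose_of_trivial, transpose_mul, Matrix.mul_sub,
          Matrix.sub_mul, Matrix.mul_one, Matrix.mul_assoc]
      rw [h]
      simpa using hW.conjTranspose_mul_mul_same Bu
    rw [sum_Ico_sq_sval B ⟨μ, hμ⟩, sum_Ico_sq_sval Bu ⟨μ, hμ⟩]
    exact sum_Ici_sortedDesc_le_of_posSemidef_sub _ _ hgram _
  · rw [Ico_eq_empty (by omega), sum_empty]
    exact sum_nonneg fun i _ => sq_nonneg _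

theorem sum_Ico_div_prod_mod_mul_prod (f : ℕ → ℕ) (c a : ℕ) {b : ℕ} (hab : a ≤ b) :
    ∑ k ∈ Ico a b, c / (∏ t ∈ Ico a k, f t) % f k * ∏ t ∈ Ico a k, f t
      = c % ∏ t ∈ Ico a b, f t := by
  induction b, hab using Nat.le_induction with
  | base => simp [Nat.mod_one]
  | succ b hab ih => rw [sum_Ico_succ_top hab, ih, prod_Ico_succ_top hab, Nat.mod_mul]; ring

section MultiIndex

variable {N : ℕ} (I : ℕ → ℕ) (x : (k : Fin N) → Fin (I ((k : ℕ) + 1)))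

lemma pv_of_lt {k : ℕ} (hk : k < N) : pv x k = x ⟨k, hk⟩ := dif_pos hk

lemma pv_lt {k : ℕ} (hk : k < N) : pv x k < I (k + 1) := by
  rw [pv_of_lt I x hk]
  exact (x ⟨k, hk⟩).isLt

lemma ttCode_succ (a : ℕ) : ttCode I x a (a + 1) = pv x a := by
  simp [ttCode]

lemma ttCode_add {a b c : ℕ} (hab : a ≤ b) (hbc : b ≤ c) :
    ttCode I x a c = ttCode I x a b + ttCode I x b c * ∏ t ∈ Ico a b, I (t + 1) := by
  rw [ttCode, ttCode, ttCode, ← sum_Ico_consecutive _ hab hbc, sum_mul]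
  congr 1
  refine sum_congr rfl fun k hk => ?_
  rw [← prod_Ico_consecutive _ hab (mem_Ico.mp hk).1]
  ring

end MultiIndex

theorem exists_ttCode_eq (I : ℕ → ℕ) {N n : ℕ} (hn : n ≤ N) {c d : ℕ}
    (hc : c < ∏ t ∈ range n, I (t + 1)) (hd : d < ∏ t ∈ Ico n N, I (t + 1)) :
    ∃ x : (k : Fin N) → Fin (I ((k : ℕ) + 1)), ttCode I x 0 n = c ∧ ttCode I x n N = d := by
  have hpos : ∀ k : Fin N, 0 < I (k + 1) := by
    intro k
    refine Nat.pos_of_ne_zero fun h => ?_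
    by_cases hk : (k : ℕ) < n
    · rw [prod_eq_zero (mem_range.mpr hk) h] at hc; omega
    · rw [prod_eq_zero (mem_Ico.mpr ⟨not_lt.mp hk, k.isLt⟩) h] at hd; omega
  let digit (a e k : ℕ) : ℕ := e / (∏ t ∈ Ico a k, I (t + 1)) % I (k + 1)
  let x : (k : Fin N) → Fin (I ((k : ℕ) + 1)) := fun k =>
    ⟨if (k : ℕ) < n then digit 0 c k else digit n d k,
      by split_ifs <;> exact Nat.mod_lt _ (hpos k)⟩
  refine ⟨x, ?_, ?_⟩
  · rw [ttCode, ← Nat.mod_eq_of_lt hc, range_eq_Ico,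
      ← sum_Ico_div_prod_mod_mul_prod _ c 0 n.zero_le]
    refine sum_congr rfl fun k hk => ?_
    have hk := mem_Ico.mp hk
    rw [pv_of_lt I x (by omega)]
    simp only [x, hk.2, if_true, digit]
  · rw [ttCode, ← Nat.mod_eq_of_lt hd, ← sum_Ico_div_prod_mod_mul_prod _ d n hn]
    refine sum_congr rfl fun k hk => ?_
    have hk := mem_Ico.mp hk
    rw [pv_of_lt I x hk.2]
    simp only [x, not_lt.mpr hk.1, if_false, digit]

/-- The fast digit `i` of the column index `i + I j` of `R` becomes the slow digit of the row
index `s + p i` of `B`: this is how `A_{n+1}` arises from `Q_nᵀ A_n`, and `A_([n+1])` from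
`A_([n])`. -/
def IsReshape {p K m J : ℕ} (I : ℕ) (R : Matrix (Fin p) (Fin K) ℝ)
    (B : Matrix (Fin m) (Fin J) ℝ) : Prop :=
  ∀ (s : Fin p) (i : Fin I) (j : Fin J) (a : Fin m) (b : Fin K),
    (a : ℕ) = s + p * i → (b : ℕ) = i + I * j → B a j = R s b

theorem IsReshape.exists_isContraction_eq_mul {p q I J K m m' : ℕ} {M : Matrix (Fin p) (Fin q) ℝ}
    {R : Matrix (Fin q) (Fin K) ℝ} {B : Matrix (Fin m) (Fin J) ℝ}
    {B' : Matrix (Fin m') (Fin J) ℝ}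
    (hm : m = p * I) (hm' : m' = q * I) (hK : K = I * J) (hM : IsContraction M)
    (hB : IsReshape I (M * R) B) (hB' : IsReshape I R B') :
    ∃ W : Matrix (Fin m) (Fin m') ℝ, IsContraction W ∧ B = W * B' := by
  subst hm hm' hK
  let merge (k : ℕ) : Fin I × Fin k ≃ Fin (k * I) :=
    finProdFinEquiv.trans (finCongr (mul_comm I k))
  refine ⟨((1 : Matrix (Fin I) (Fin I) ℝ) ⊗ₖ M).submatrix (merge p).symm (merge q).symm,
    hM.one_kronecker.submatrix _ _, ?_⟩
  ext a j
  obtain ⟨⟨i, s⟩, rfl⟩ := (merge p).surjective a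
  let b : Fin (I * J) := finCongr (mul_comm J I) (finProdFinEquiv (j, i))
  rw [hB s i j _ b rfl rfl, Matrix.mul_apply, Matrix.mul_apply, ← (merge q).sum_comp,
    Fintype.sum_prod_type]
  simp only [submatrix_apply, Equiv.symm_apply_apply, kroneckerMap_apply, Matrix.one_apply,
    ite_mul, one_mul, zero_mul]
  rw [sum_eq_single i (fun i' _ hi' => sum_eq_zero fun c _ => if_neg (Ne.symm hi'))
    (fun h => absurd (mem_univ i) h)]
  exact sum_congr rfl fun c _ => by rw [if_pos rfl, hB' c i j _ b rfl rfl]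

def IsUnfolding {N : ℕ} (I : ℕ → ℕ) (A : ((k : Fin N) → Fin (I ((k : ℕ) + 1))) → ℝ) (n : ℕ)
    (U : Matrix (Fin (∏ t ∈ range n, I (t + 1))) (Fin (∏ t ∈ Ico n N, I (t + 1))) ℝ) : Prop :=
  ∀ (x : (k : Fin N) → Fin (I ((k : ℕ) + 1))) (a : Fin (∏ t ∈ range n, I (t + 1)))
    (b : Fin (∏ t ∈ Ico n N, I (t + 1))),
    (a : ℕ) = ttCode I x 0 n → (b : ℕ) = ttCode I x n N → U a b = A x

theorem IsUnfolding.isReshape_succ {N : ℕ} {I : ℕ → ℕ}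
    {A : ((k : Fin N) → Fin (I ((k : ℕ) + 1))) → ℝ} {n : ℕ}
    {U : Matrix (Fin (∏ t ∈ range n, I (t + 1))) (Fin (∏ t ∈ Ico n N, I (t + 1))) ℝ}
    {U' :
      Matrix (Fin (∏ t ∈ range (n + 1), I (t + 1))) (Fin (∏ t ∈ Ico (n + 1) N, I (t + 1))) ℝ}
    (hU : IsUnfolding I A n U) (hU' : IsUnfolding I A (n + 1) U') (hn : n < N) :
    IsReshape (I (n + 1)) U U' := by
  intro c i j a b ha hb
  obtain ⟨x, hxc, hxb⟩ := exists_ttCode_eq I hn.le c.isLt b.isLt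
  have hsplit : ttCode I x n N = pv x n + I (n + 1) * ttCode I x (n + 1) N := by
    rw [ttCode_add I x n.le_succ hn, ttCode_succ, Nat.Ico_succ_singleton, prod_singleton,
      mul_comm]
  obtain ⟨hj, hi⟩ := (Nat.div_mod_unique i.pos).mpr ⟨hb.symm, i.isLt⟩
  obtain ⟨hj', hi'⟩ := (Nat.div_mod_unique i.pos).mpr ⟨(hxb ▸ hsplit).symm, pv_lt I x hn⟩
  rw [hU x c b hxc.symm hxb.symm]
  refine hU' x a j ?_ (by rw [← hj, hj'])
  rw [ttCode_add I x n.zero_le n.le_succ, ttCode_succ, ← range_eq_Ico, hxc, ha, ← hi, hi']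
  ring

theorem exists_isContraction_eq_mul_of_isUnfolding_one {N m : ℕ} {I : ℕ → ℕ}
    {A : ((k : Fin N) → Fin (I ((k : ℕ) + 1))) → ℝ}
    {B : Matrix (Fin m) (Fin (∏ t ∈ Ico 1 N, I (t + 1))) ℝ}
    {U : Matrix (Fin (∏ t ∈ range 1, I (t + 1))) (Fin (∏ t ∈ Ico 1 N, I (t + 1))) ℝ}
    (hm : m = ∏ t ∈ range 1, I (t + 1))
    (hB : ∀ (x : (k : Fin N) → Fin (I ((k : ℕ) + 1))) (a : Fin m)
      (b : Fin (∏ t ∈ Ico 1 N, I (t + 1))),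
      (a : ℕ) = pv x 0 → (b : ℕ) = ttCode I x 1 N → B a b = A x)
    (hU : IsUnfolding I A 1 U) (hN : 1 ≤ N) :
    ∃ W : Matrix (Fin m) (Fin (∏ t ∈ range 1, I (t + 1))) ℝ, IsContraction W ∧ B = W * U := by
  subst hm
  refine ⟨1, isContraction_one, ?_⟩
  ext a b
  obtain ⟨x, hxa, hxb⟩ := exists_ttCode_eq I hN a.isLt b.isLt
  rw [Matrix.one_mul, hB x a b (by rw [← ttCode_succ, hxa]) hxb.symm, hU x a b hxa.symm hxb.symm]

theorem tt_tail_le_unfolding_tail_general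
    (N : ℕ)
    -- dimensions `I 1, …, I N` and TT-ranks `r 0 = μ₀ = 1, r 1 = μ₁, …, r N = μ_N = 1`
    (I r : ℕ → ℕ) (hr0 : r 0 = 1)
    -- the tensor `A ∈ ℝ^{I₁ × ⋯ × I_N}` (0-based component `k` is the paper index `i_{k+1}`)
    (A : ((k : Fin N) → Fin (I ((k : ℕ) + 1))) → ℝ)
    -- the orthonormal matrices `Q n ∈ ℝ^{μ_{n-1} I_n × μ_n}` for `n = 1, …, N-1`
    (Q : (n : ℕ) → Matrix (Fin (r (n - 1) * I n)) (Fin (r n)) ℝ)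
    (hQ : ∀ n, 1 ≤ n → n ≤ N - 1 → (Q n)ᵀ * Q n = 1)
    -- the matrices `A_n ∈ ℝ^{μ_{n-1} I_n × (I_{n+1} ⋯ I_N)}` for `n = 1, …, N-1`
    (Amat : (n : ℕ) →
      Matrix (Fin (r (n - 1) * I n)) (Fin (∏ t ∈ Finset.Ico n N, I (t + 1))) ℝ)
    -- `A₁` is the first unfolding `A_{([1])}` of `A`
    (hA1 : ∀ (x : (k : Fin N) → Fin (I ((k : ℕ) + 1))) (a : Fin (r 0 * I 1))
      (b : Fin (∏ t ∈ Finset.Ico 1 N, I (t + 1))),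
      (a : ℕ) = pv x 0 → (b : ℕ) = ttCode I x 1 N → Amat 1 a b = A x)
    -- for `n = 2, …, N-1`, `A_n` is the reshaping of `Q_{n-1}ᵀ A_{n-1}` merging the row
    -- index with the `I_n` index:  `A_n(s + μ_{n-1} i, j) = (Q_{n-1}ᵀ A_{n-1})(s, i + I_n j)`
    (hrec : ∀ n, 2 ≤ n → n ≤ N - 1 →
      ∀ (s : Fin (r (n - 1))) (i : Fin (I n)) (j : Fin (∏ t ∈ Finset.Ico n N, I (t + 1)))
        (a : Fin (r (n - 1) * I n)) (b : Fin (∏ t ∈ Finset.Ico (n - 1) N, I (t + 1))),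
        (a : ℕ) = (s : ℕ) + r (n - 1) * (i : ℕ) →
        (b : ℕ) = (i : ℕ) + I n * (j : ℕ) →
        Amat n a j = ((Q (n - 1))ᵀ * Amat (n - 1)) s b)
    -- the unfoldings `A_{([n])} ∈ ℝ^{(I₁⋯I_n) × (I_{n+1}⋯I_N)}` of `A`
    (Aun : (n : ℕ) →
      Matrix (Fin (∏ t ∈ Finset.range n, I (t + 1))) (Fin (∏ t ∈ Finset.Ico n N, I (t + 1))) ℝ)
    (hAun : ∀ n, 1 ≤ n → n ≤ N - 1 →
      ∀ (x : (k : Fin N) → Fin (I ((k : ℕ) + 1)))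
        (a : Fin (∏ t ∈ Finset.range n, I (t + 1)))
        (b : Fin (∏ t ∈ Finset.Ico n N, I (t + 1))),
        (a : ℕ) = ttCode I x 0 n → (b : ℕ) = ttCode I x n N → Aun n a b = A x) :
    ∀ n, 1 ≤ n → n ≤ N - 1 → ∀ μ : ℕ,
      (∑ i ∈ Finset.Ico μ (min (r (n - 1) * I n) (∏ t ∈ Finset.Ico n N, I (t + 1))),
          sval (Amat n) i ^ 2) ≤
        (∑ i ∈ Finset.Ico μ
            (min (∏ t ∈ Finset.range n, I (t + 1)) (∏ t ∈ Finset.Ico n N, I (t + 1))),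
          sval (Aun n) i ^ 2) ∧
      tailDelta (Amat n) μ ≤ tailDelta (Aun n) μ := by
  intro n hn hnN μ
  obtain ⟨W, hW, hAW⟩ :
      ∃ W : Matrix (Fin (r (n - 1) * I n)) (Fin (∏ t ∈ range n, I (t + 1))) ℝ,
        IsContraction W ∧ Amat n = W * Aun n := by
    induction n, hn using Nat.le_induction with
    | base =>
      exact exists_isContraction_eq_mul_of_isUnfolding_one (by simp [hr0]) hA1
        (hAun 1 le_rfl hnN) (by omega)
    | succ n hn ih =>
      obtain ⟨W, hW, hAW⟩ := ih (by omega)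
      have hM := (isContraction_transpose_of_transpose_mul_self (hQ n hn (by omega))).mul hW
      refine IsReshape.exists_isContraction_eq_mul rfl (prod_range_succ _ n)
        (prod_eq_prod_Ico_succ_bot (by omega) _) hM ?_
        (IsUnfolding.isReshape_succ (hAun n hn (by omega)) (hAun (n + 1) (by omega) hnN)
          (by omega))
      rw [Matrix.mul_assoc, ← hAW]
      exact hrec (n + 1) (by omega) hnN
  have htail := sum_Ico_sq_sval_le_of_eq_mul hW hAW μ
  exact ⟨htail, Real.sqrt_le_sqrt htail⟩

/-- The singular-value tails of `A_n` are dominated by those of the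
unfolding `A_{([n])}`:  `Σ_{i>μ} σ_i(A_n)² ≤ Σ_{i>μ} σ_i(A_{([n])})², i.e.
`Δ_{μ+1}(A_n) ≤ Δ_{μ+1}(A_{([n])})`. -/
theorem tt_tail_le_unfolding_tail
    (N : ℕ) (hN : 2 ≤ N)
    -- dimensions `I 1, …, I N` and TT-ranks `r 0 = μ₀ = 1, r 1 = μ₁, …, r N = μ_N = 1`
    (I r : ℕ → ℕ) (hr0 : r 0 = 1) (hrN : r N = 1) (hrpos : ∀ n ≤ N, 0 < r n)
    -- the tensor `A ∈ ℝ^{I₁ × ⋯ × I_N}` (0-based component `k` is the paper index `i_{k+1}`)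
    (A : ((k : Fin N) → Fin (I ((k : ℕ) + 1))) → ℝ)
    -- the orthonormal matrices `Q n ∈ ℝ^{μ_{n-1} I_n × μ_n}` for `n = 1, …, N-1`
    (Q : (n : ℕ) → Matrix (Fin (r (n - 1) * I n)) (Fin (r n)) ℝ)
    (hQ : ∀ n, 1 ≤ n → n ≤ N - 1 → (Q n)ᵀ * Q n = 1)
    -- the matrices `A_n ∈ ℝ^{μ_{n-1} I_n × (I_{n+1} ⋯ I_N)}` for `n = 1, …, N-1`
    (Amat : (n : ℕ) →
      Matrix (Fin (r (n - 1) * I n)) (Fin (∏ t ∈ Finset.Ico n N, I (t + 1))) ℝ)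
    -- `A₁` is the first unfolding `A_{([1])}` of `A`
    (hA1 : ∀ (x : (k : Fin N) → Fin (I ((k : ℕ) + 1))) (a : Fin (r 0 * I 1))
      (b : Fin (∏ t ∈ Finset.Ico 1 N, I (t + 1))),
      (a : ℕ) = pv x 0 → (b : ℕ) = ttCode I x 1 N → Amat 1 a b = A x)
    -- for `n = 2, …, N-1`, `A_n` is the reshaping of `Q_{n-1}ᵀ A_{n-1}` merging the row
    -- index with the `I_n` index:  `A_n(s + μ_{n-1} i, j) = (Q_{n-1}ᵀ A_{n-1})(s, i + I_n j)`
    (hrec : ∀ n, 2 ≤ n → n ≤ N - 1 →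
      ∀ (s : Fin (r (n - 1))) (i : Fin (I n)) (j : Fin (∏ t ∈ Finset.Ico n N, I (t + 1)))
        (a : Fin (r (n - 1) * I n)) (b : Fin (∏ t ∈ Finset.Ico (n - 1) N, I (t + 1))),
        (a : ℕ) = (s : ℕ) + r (n - 1) * (i : ℕ) →
        (b : ℕ) = (i : ℕ) + I n * (j : ℕ) →
        Amat n a j = ((Q (n - 1))ᵀ * Amat (n - 1)) s b)
    -- the unfoldings `A_{([n])} ∈ ℝ^{(I₁⋯I_n) × (I_{n+1}⋯I_N)}` of `A`
    (Aun : (n : ℕ) →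
      Matrix (Fin (∏ t ∈ Finset.range n, I (t + 1))) (Fin (∏ t ∈ Finset.Ico n N, I (t + 1))) ℝ)
    (hAun : ∀ n, 1 ≤ n → n ≤ N - 1 →
      ∀ (x : (k : Fin N) → Fin (I ((k : ℕ) + 1)))
        (a : Fin (∏ t ∈ Finset.range n, I (t + 1)))
        (b : Fin (∏ t ∈ Finset.Ico n N, I (t + 1))),
        (a : ℕ) = ttCode I x 0 n → (b : ℕ) = ttCode I x n N → Aun n a b = A x) :
    ∀ n, 1 ≤ n → n ≤ N - 1 → ∀ μ : ℕ,
      (∑ i ∈ Finset.Ico μ (min (r (n - 1) * I n) (∏ t ∈ Finset.Ico n N, I (t + 1))),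
          sval (Amat n) i ^ 2) ≤
        (∑ i ∈ Finset.Ico μ
            (min (∏ t ∈ Finset.range n, I (t + 1)) (∏ t ∈ Finset.Ico n N, I (t + 1))),
          sval (Aun n) i ^ 2) ∧
      tailDelta (Amat n) μ ≤ tailDelta (Aun n) μ :=
  tt_tail_le_unfolding_tail_general N I r hr0 A Q hQ Amat hA1 hrec Aun hAun
end
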